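/- arXiv:2601.12564 — 6 statements merged into one kernel-verified Lean document; each statement's English description precedes it below -/
import Mathlib

section
/- Suppose complex numbers x₁,y₁,z₁,w₁,x₂,y₂,z₂,w₂ satisfy the Bogoliubov identities |x_i|²+|z_i|²-|y_i|²-|w_i|² = 1 for i=1,2, x₁x₂* + z₁z₂* - y₁y₂* - w₁w₂* = 0, and x₁y₂ - y₁x₂ + z₁w₂ - w₁z₂ = 0. Define n_i = |y_i|² + |w_i|². If additionally the uncorrelatedness conditions y₁*y₂ + w₁*w₂ = 0 and x₁y₂ + z₁w₂ = 0 hold, with y₂, w₂ not both zero and n₁ > 0, then z₁ y₁* = x₁ w₁*. -/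
open Complex

/-- Under the Bogoliubov identities and uncorrelatedness conditions,
z₁ y₁* = x₁ w₁*. -/
theorem stmt_3 (x₁ y₁ z₁ w₁ x₂ y₂ z₂ w₂ : ℂ)
    (hB1 : ‖x₁‖ ^ 2 + ‖z₁‖ ^ 2 - ‖y₁‖ ^ 2 - ‖w₁‖ ^ 2 = 1)
    (hB2 : ‖x₂‖ ^ 2 + ‖z₂‖ ^ 2 - ‖y₂‖ ^ 2 - ‖w₂‖ ^ 2 = 1)
    (hB12 : x₁ * (starRingEnd ℂ) x₂ + z₁ * (starRingEnd ℂ) z₂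
      - y₁ * (starRingEnd ℂ) y₂ - w₁ * (starRingEnd ℂ) w₂ = 0)
    (hcomm : x₁ * y₂ - y₁ * x₂ + z₁ * w₂ - w₁ * z₂ = 0)
    (huncorr1 : (starRingEnd ℂ) y₁ * y₂ + (starRingEnd ℂ) w₁ * w₂ = 0)
    (huncorr2 : x₁ * y₂ + z₁ * w₂ = 0)
    (hnz : ¬(y₂ = 0 ∧ w₂ = 0))
    (hn1 : 0 < ‖y₁‖ ^ 2 + ‖w₁‖ ^ 2) :
    z₁ * (starRingEnd ℂ) y₁ = x₁ * (starRingEnd ℂ) w₁ := by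
  have h1 : (z₁ * (starRingEnd ℂ) y₁ - x₁ * (starRingEnd ℂ) w₁) * y₂ = 0 := by
    linear_combination z₁ * huncorr1 - (starRingEnd ℂ) w₁ * huncorr2
  have h2 : (z₁ * (starRingEnd ℂ) y₁ - x₁ * (starRingEnd ℂ) w₁) * w₂ = 0 := by
    linear_combination (starRingEnd ℂ) y₁ * huncorr2 - x₁ * huncorr1
  by_cases hy : y₂ = 0
  · have hw : w₂ ≠ 0 := fun h => hnz ⟨hy, h⟩
    have := mul_eq_zero.mp h2
    rcases this with h | h
    · exact sub_eq_zero.mp h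
    · exact absurd h hw
  · rcases mul_eq_zero.mp h1 with h | h
    · exact sub_eq_zero.mp h
    · exact absurd h hy
end

section
/- Let x₁,y₁,z₁,w₁ be complex numbers and n₁ > 0, m₁ ≠ 0 complex with y₁y₁* + w₁w₁* = n₁, x₁y₁ + z₁w₁ = m₁, x₁x₁* + z₁z₁* = n₁+1, and z₁y₁* = x₁w₁*. Then |m₁|² = n₁(n₁+1), i.e. the induced single-mode state is maximally squeezed. -/
/-- Coefficient identities of a single mode from a Bogoliubov transformation,
together with z₁y₁* = x₁w₁*, force maximal squeezing: |m₁|² = n₁(n₁+1). -/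
theorem stmt_4 (x₁ y₁ z₁ w₁ : ℂ) (n₁ : ℝ) (m₁ : ℂ) (hn₁ : 0 < n₁) (hm₁ : m₁ ≠ 0)
    (hn : y₁ * (starRingEnd ℂ) y₁ + w₁ * (starRingEnd ℂ) w₁ = (n₁ : ℂ))
    (hm : x₁ * y₁ + z₁ * w₁ = m₁)
    (hn1 : x₁ * (starRingEnd ℂ) x₁ + z₁ * (starRingEnd ℂ) z₁ = (n₁ : ℂ) + 1)
    (huncorr : z₁ * (starRingEnd ℂ) y₁ = x₁ * (starRingEnd ℂ) w₁) :
    ‖m₁‖ ^ 2 = n₁ * (n₁ + 1) := by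
  have hmc : (starRingEnd ℂ) x₁ * (starRingEnd ℂ) y₁ + (starRingEnd ℂ) z₁ * (starRingEnd ℂ) w₁
      = (starRingEnd ℂ) m₁ := by
    have := congrArg (starRingEnd ℂ) hm
    simpa [map_add, map_mul] using this
  have key : m₁ * (starRingEnd ℂ) m₁ = (n₁ : ℂ) * ((n₁ : ℂ) + 1) := by
    linear_combination (-(starRingEnd ℂ) m₁) * hm + (-(x₁ * y₁ + z₁ * w₁)) * hmc
      + (w₁ * (starRingEnd ℂ) x₁ - (starRingEnd ℂ) z₁ * y₁) * huncorr
      + (x₁ * (starRingEnd ℂ) x₁ + z₁ * (starRingEnd ℂ) z₁) * hn + (n₁ : ℂ) * hn1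
  have : ((‖m₁‖ ^ 2 : ℝ) : ℂ) = ((n₁ * (n₁ + 1) : ℝ) : ℂ) := by
    rw [Complex.sq_norm, ← Complex.mul_conj, key]; push_cast; ring
  exact_mod_cast this
end

section
/- Let x = κ₊(ρ/2 + m/2 + 1/4), y = κ₊(ρ/2 + m/2 − 1/4), z = κ₋(ρ/2 − m/2 − 1/4), w = κ₋(ρ/2 − m/2 + 1/4), where m is real, n ≥ 0 with n(n+1) > m², ρ = sqrt(m² + 1/4), and κ± = sqrt((n + 1/2 ± ρ)/(ρ(ρ ± m))). Then |x|² + |z|² − |y|² − |w|² = 1. -/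
/-- The HKKR coefficients (real m, sub-maximal squeezing) satisfy the first
Bogoliubov identity |x|² + |z|² − |y|² − |w|² = 1. -/
theorem stmt_5 (n m : ℝ) (hn : 0 ≤ n) (hsub : m ^ 2 < n * (n + 1)) :
    let ρ := Real.sqrt (m ^ 2 + 1 / 4)
    let κp := Real.sqrt ((n + 1 / 2 + ρ) / (ρ * (ρ + m)))
    let κm := Real.sqrt ((n + 1 / 2 - ρ) / (ρ * (ρ - m)))
    let x := κp * (ρ / 2 + m / 2 + 1 / 4)
    let y := κp * (ρ / 2 + m / 2 - 1 / 4)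
    let z := κm * (ρ / 2 - m / 2 - 1 / 4)
    let w := κm * (ρ / 2 - m / 2 + 1 / 4)
    x ^ 2 + z ^ 2 - y ^ 2 - w ^ 2 = 1 := by
  intro ρ κp κm x y z w
  have hρ2 : ρ ^ 2 = m ^ 2 + 1 / 4 := Real.sq_sqrt (by positivity)
  have hρpos : 0 < ρ := Real.sqrt_pos.2 (by positivity)
  have habs : |m| < ρ := by
    nlinarith [abs_nonneg m, sq_abs m]
  have hρm1 : 0 < ρ + m := by
    have := neg_abs_le m; linarith
  have hρm2 : 0 < ρ - m := by
    have := le_abs_self m; linarith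
  have hρlt : ρ < n + 1 / 2 := by
    nlinarith
  have hκp : κp ^ 2 = (n + 1 / 2 + ρ) / (ρ * (ρ + m)) :=
    Real.sq_sqrt (by positivity)
  have hκm : κm ^ 2 = (n + 1 / 2 - ρ) / (ρ * (ρ - m)) := by
    refine Real.sq_sqrt ?_
    have : 0 < n + 1 / 2 - ρ := by linarith
    positivity
  show (κp * (ρ / 2 + m / 2 + 1 / 4)) ^ 2 + (κm * (ρ / 2 - m / 2 - 1 / 4)) ^ 2
      - (κp * (ρ / 2 + m / 2 - 1 / 4)) ^ 2 - (κm * (ρ / 2 - m / 2 + 1 / 4)) ^ 2 = 1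
  rw [mul_pow, mul_pow, mul_pow, mul_pow, hκp, hκm]
  field_simp
  ring
end

section
/- With x,y,z,w as in the HKKR parametrization (real m, ρ = sqrt(m²+1/4), κ± = sqrt((n+1/2±ρ)/(ρ(ρ±m)))), one has |y|² + |w|² = n and xy + zw = m; i.e., the induced single-mode state has number n and squeezing m. -/
/-- The HKKR coefficients induce a single-mode state with number n and
squeezing m: |y|² + |w|² = n and xy + zw = m. -/
theorem stmt_6 (n m : ℝ) (hn : 0 ≤ n) (hsub : m ^ 2 < n * (n + 1)) :
    let ρ := Real.sqrt (m ^ 2 + 1 / 4)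
    let κp := Real.sqrt ((n + 1 / 2 + ρ) / (ρ * (ρ + m)))
    let κm := Real.sqrt ((n + 1 / 2 - ρ) / (ρ * (ρ - m)))
    let x := κp * (ρ / 2 + m / 2 + 1 / 4)
    let y := κp * (ρ / 2 + m / 2 - 1 / 4)
    let z := κm * (ρ / 2 - m / 2 - 1 / 4)
    let w := κm * (ρ / 2 - m / 2 + 1 / 4)
    y ^ 2 + w ^ 2 = n ∧ x * y + z * w = m := by
  intro ρ κp κm x y z w
  have hq : (0:ℝ) < m ^ 2 + 1 / 4 := by positivity
  have hρ2 : ρ ^ 2 = m ^ 2 + 1 / 4 := Real.sq_sqrt hq.le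
  have hρpos : 0 < ρ := Real.sqrt_pos.mpr hq
  have hpm : 0 < ρ + m := by nlinarith
  have hmm : 0 < ρ - m := by nlinarith
  have hρn : ρ < n + 1 / 2 := by nlinarith
  have hκp2 : κp ^ 2 = (n + 1 / 2 + ρ) / (ρ * (ρ + m)) :=
    Real.sq_sqrt (div_nonneg (by linarith) (by positivity))
  have hκm2 : κm ^ 2 = (n + 1 / 2 - ρ) / (ρ * (ρ - m)) :=
    Real.sq_sqrt (div_nonneg (by linarith) (by positivity))
  constructor
  · show (κp * (ρ / 2 + m / 2 - 1 / 4)) ^ 2 + (κm * (ρ / 2 - m / 2 + 1 / 4)) ^ 2 = n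
    rw [mul_pow, mul_pow, hκp2, hκm2]
    field_simp
    linear_combination ((-32:ℝ) + 64*m - 64*n) * ρ * hρ2
  · show κp * (ρ / 2 + m / 2 + 1 / 4) * (κp * (ρ / 2 + m / 2 - 1 / 4)) +
      κm * (ρ / 2 - m / 2 - 1 / 4) * (κm * (ρ / 2 - m / 2 + 1 / 4)) = m
    have h1 : κp * (ρ / 2 + m / 2 + 1 / 4) * (κp * (ρ / 2 + m / 2 - 1 / 4)) =
        κp ^ 2 * ((ρ / 2 + m / 2 + 1 / 4) * (ρ / 2 + m / 2 - 1 / 4)) := by ring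
    have h2 : κm * (ρ / 2 - m / 2 - 1 / 4) * (κm * (ρ / 2 - m / 2 + 1 / 4)) =
        κm ^ 2 * ((ρ / 2 - m / 2 - 1 / 4) * (ρ / 2 - m / 2 + 1 / 4)) := by ring
    rw [h1, h2, hκp2, hκm2]
    field_simp
    linear_combination ((32:ℝ) - 64*m + 64*n) * ρ * hρ2
end

section
/- Suppose α, β, γ, δ are complex numbers with α + γ = 1, δ = −β, and real n ≥ 0, complex m with 2n+1+Re(m) > 0, satisfying: (2n+1+Re m)|α|² + s|β|² = n, (2n+1+Re m)|γ|² + s|δ|² = n+1, and (2n+1+Re m)γ*α + s δ*β = m, where s = 2n+1+Re(e^{2iλ}m) for some real λ. Then α = (n + (1/2)Re m + i Im m)/(2n+1+Re m) and γ = (n+1 + (1/2)Re m − i Im m)/(2n+1+Re m). -/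
/-- The moment identities, together with α + γ = 1 and δ = −β, determine the
transfer coefficients α and γ explicitly. -/
theorem stmt_13 (α β γ δ : ℂ) (n : ℝ) (m : ℂ) (l : ℝ) (hn : 0 ≤ n)
    (hpos : 0 < 2 * n + 1 + m.re)
    (hsum : α + γ = 1) (hdb : δ = -β)
    (hid1 : (2 * n + 1 + m.re) * ‖α‖ ^ 2
      + (2 * n + 1 + (Complex.exp (2 * (l : ℝ) * Complex.I) * m).re) * ‖β‖ ^ 2 = n)
    (hid2 : (2 * n + 1 + m.re) * ‖γ‖ ^ 2
      + (2 * n + 1 + (Complex.exp (2 * (l : ℝ) * Complex.I) * m).re) * ‖δ‖ ^ 2 = n + 1)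
    (hid3 : ((2 * n + 1 + m.re) : ℂ) * (starRingEnd ℂ) γ * α
      + (((2 * n + 1 + (Complex.exp (2 * (l : ℝ) * Complex.I) * m).re) : ℝ) : ℂ)
        * (starRingEnd ℂ) δ * β = m) :
    α = (((n : ℂ) + (m.re / 2 : ℝ) + (m.im : ℝ) * Complex.I)) / ((2 * n + 1 + m.re : ℝ) : ℂ) ∧
    γ = (((n : ℂ) + 1 + (m.re / 2 : ℝ) - (m.im : ℝ) * Complex.I)) / ((2 * n + 1 + m.re : ℝ) : ℂ) := by
  have hγ : γ = 1 - α := by linear_combination hsum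
  subst hdb hγ
  have hAne : (2 * n + 1 + m.re) ≠ 0 := ne_of_gt hpos
  rw [Complex.sq_norm, Complex.sq_norm] at hid1 hid2
  simp only [Complex.normSq_apply, Complex.sub_re, Complex.sub_im, Complex.one_re,
    Complex.one_im, Complex.neg_re, Complex.neg_im] at hid1 hid2
  generalize hsdef : (2 * n + 1 + (Complex.exp (2 * (l : ℝ) * Complex.I) * m).re) = s at hid1 hid2 hid3
  have h3re := congrArg Complex.re hid3
  have h3im := congrArg Complex.im hid3
  simp [Complex.add_re, Complex.add_im, Complex.mul_re, Complex.mul_im,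
    Complex.conj_re, Complex.conj_im, Complex.sub_re, Complex.sub_im,
    Complex.one_re, Complex.one_im, Complex.ofReal_re, Complex.ofReal_im,
    Complex.neg_re, Complex.neg_im] at h3re h3im
  have key1 : (2 * n + 1 + m.re) * α.re = m.re + n := by linear_combination h3re + hid1
  have hmre : m.re = 0 := by linear_combination hid1 - hid2 - 2 * key1
  have hb : (2 * n + 1 + m.re) * α.im = m.im := by linear_combination h3im
  constructor
  · rw [eq_div_iff (by exact_mod_cast hAne)]
    apply Complex.ext <;>
      simp [Complex.add_re, Complex.add_im, Complex.mul_re, Complex.mul_im,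
        Complex.ofReal_re, Complex.ofReal_im, Complex.I_re, Complex.I_im] <;>
      linarith [key1, hb, hmre]
  · rw [eq_div_iff (by exact_mod_cast hAne)]
    apply Complex.ext <;>
      simp [Complex.add_re, Complex.add_im, Complex.sub_re, Complex.sub_im,
        Complex.mul_re, Complex.mul_im, Complex.one_re, Complex.one_im,
        Complex.ofReal_re, Complex.ofReal_im, Complex.I_re, Complex.I_im] <;>
      linarith [key1, hb, hmre]
end

section
/- Let S_−, S_+ be bounded complex-linear operators on a complex Hilbert space H with conjugation j, and suppose the real-linear map Sφ = S_−φ + S_+ jφ preserves the symplectic form σ(φ,ψ) = Im⟨φ,ψ⟩, and that the block operator S̆ = [[S_−, S_+],[jS_+j, jS_−j]] on H ⊕ H is bijective. Then S̆⁻¹ = [[S_−*, −jS_+*j],[−S_+*, jS_−*j]], where * denotes the Hilbert space adjoint. -/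
open ContinuousLinearMap

private lemma stmt_19_aux {H : Type*} [NormedAddCommGroup H] [InnerProductSpace ℂ H]
    [CompleteSpace H] (j : H → H)
    (hadd : ∀ φ ψ : H, j (φ + ψ) = j φ + j ψ)
    (hjneg : ∀ ψ : H, j (-ψ) = -(j ψ))
    (hj0 : j 0 = 0)
    (hinv : ∀ ψ : H, j (j ψ) = ψ)
    (Sm Sp Scm Scp Stm Stp a b : H →L[ℂ] H)
    (hScm : ∀ ψ : H, Scm ψ = j (Sm (j ψ)))
    (hScp : ∀ ψ : H, Scp ψ = j (Sp (j ψ)))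
    (hStm : ∀ ψ : H, Stm ψ = j (a (j ψ)))
    (hStp : ∀ ψ : H, Stp ψ = j (b (j ψ)))
    (F1 : ∀ ψ : H, a (Sm ψ) = ψ + j (b (Sp (j ψ))))
    (F2 : ∀ ψ : H, a (Sp ψ) = j (b (Sm (j ψ))))
    (hsurj : ∀ u v : H, ∃ φ χ : H, Sm φ + Sp χ = u ∧ j (Sp (j φ)) + j (Sm (j χ)) = v) :
    (!![Sm, Sp; Scp, Scm] : Matrix (Fin 2) (Fin 2) (H →L[ℂ] H)) *
        !![a, -Stp; -b, Stm] = 1 ∧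
    (!![a, -Stp; -b, Stm] : Matrix (Fin 2) (Fin 2) (H →L[ℂ] H)) *
        !![Sm, Sp; Scp, Scm] = 1 := by
  have hjsub : ∀ φ ψ : H, j (φ - ψ) = j φ - j ψ := by
    intro φ ψ
    rw [sub_eq_add_neg, hadd, hjneg, sub_eq_add_neg]
  have G : ∀ u v : H,
      Sm (a u - j (b (j v))) + Sp (j (a (j v)) - b u) = u := by
    intro u v
    obtain ⟨φ, χ, h1, h2⟩ := hsurj u v
    have hjv : j v = Sp (j φ) + Sm (j χ) := by
      rw [← h2, hadd, hinv, hinv]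
    have hau : a u = φ + j (b (Sp (j φ))) + j (b (Sm (j χ))) := by
      rw [← h1, map_add, F1 φ, F2 χ]
    have hbjv : j (b (j v)) = j (b (Sp (j φ))) + j (b (Sm (j χ))) := by
      rw [hjv, map_add, hadd]
    have hajv : j (a (j v)) = b (Sm φ) + χ + b (Sp χ) := by
      rw [hjv, map_add, F2 (j φ), F1 (j χ)]
      simp only [hinv, hadd]
      abel
    have hbu : b u = b (Sm φ) + b (Sp χ) := by
      rw [← h1, map_add]
    have e1 : a u - j (b (j v)) = φ := by
      rw [hau, hbjv]; abel
    have e2 : j (a (j v)) - b u = χ := by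
      rw [hajv, hbu]; abel
    rw [e1, e2, h1]
  have G1 : ∀ u : H, Sm (a u) - Sp (b u) = u := by
    intro u
    have h := G u 0
    rw [hj0, map_zero, hj0, map_zero, hj0, sub_zero, zero_sub, map_neg] at h
    rw [sub_eq_add_neg]
    exact h
  have G2 : ∀ v : H, Sm (j (b (j v))) = Sp (j (a (j v))) := by
    intro v
    have h := G 0 v
    rw [map_zero, map_zero, zero_sub, sub_zero, map_neg] at h
    exact neg_add_eq_zero.mp h
  have L00 : Sm * a + Sp * -b = 1 := by
    ext x
    simp only [ContinuousLinearMap.mul_apply, ContinuousLinearMap.add_apply,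
      ContinuousLinearMap.neg_apply, ContinuousLinearMap.one_apply, map_neg]
    rw [← sub_eq_add_neg]
    exact G1 x
  have L01 : Sm * -Stp + Sp * Stm = 0 := by
    ext x
    simp only [ContinuousLinearMap.mul_apply, ContinuousLinearMap.add_apply,
      ContinuousLinearMap.neg_apply, ContinuousLinearMap.zero_apply, map_neg, hStp, hStm]
    rw [G2 x]
    abel
  have L10 : Scp * a + Scm * -b = 0 := by
    ext x
    simp only [ContinuousLinearMap.mul_apply, ContinuousLinearMap.add_apply,
      ContinuousLinearMap.neg_apply, ContinuousLinearMap.zero_apply, map_neg, hScp, hScm]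
    have h := G2 (j x)
    rw [hinv] at h
    rw [hjneg (b x), map_neg, hjneg, h]
    abel
  have L11 : Scp * -Stp + Scm * Stm = 1 := by
    ext x
    simp only [ContinuousLinearMap.mul_apply, ContinuousLinearMap.add_apply,
      ContinuousLinearMap.neg_apply, ContinuousLinearMap.one_apply, hScp, hScm,
      hStp, hStm]
    rw [hjneg (j (b (j x))), hinv (b (j x)), map_neg, hjneg, hinv (a (j x)),
      neg_add_eq_sub, ← hjsub, G1 (j x), hinv]
  have R00 : a * Sm + -Stp * Scp = 1 := by
    ext x
    simp only [ContinuousLinearMap.mul_apply, ContinuousLinearMap.add_apply,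
      ContinuousLinearMap.neg_apply, ContinuousLinearMap.one_apply, hStp, hScp, hinv]
    rw [F1 x]
    abel
  have R01 : a * Sp + -Stp * Scm = 0 := by
    ext x
    simp only [ContinuousLinearMap.mul_apply, ContinuousLinearMap.add_apply,
      ContinuousLinearMap.neg_apply, ContinuousLinearMap.zero_apply, hStp, hScm, hinv]
    rw [F2 x]
    abel
  have R10 : -b * Sm + Stm * Scp = 0 := by
    ext x
    simp only [ContinuousLinearMap.mul_apply, ContinuousLinearMap.add_apply,
      ContinuousLinearMap.neg_apply, ContinuousLinearMap.zero_apply, hStm, hScp, hinv]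
    rw [F2 (j x), hinv, hinv]
    abel
  have R11 : -b * Sp + Stm * Scm = 1 := by
    ext x
    simp only [ContinuousLinearMap.mul_apply, ContinuousLinearMap.add_apply,
      ContinuousLinearMap.neg_apply, ContinuousLinearMap.one_apply, hStm, hScm, hinv]
    rw [F1 (j x)]
    simp only [hinv]
    rw [hadd, hinv, hinv]
    abel
  constructor
  · rw [Matrix.mul_fin_two, L00, L01, L10, L11, Matrix.one_fin_two]
  · rw [Matrix.mul_fin_two, R00, R01, R10, R11, Matrix.one_fin_two]

private lemma stmt_19_core {H : Type*} [NormedAddCommGroup H] [InnerProductSpace ℂ H]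
    [CompleteSpace H] (j : H → H)
    (hsmul : ∀ (c : ℂ) (ψ : H), j (c • ψ) = (starRingEnd ℂ c) • j ψ)
    (hanti : ∀ φ ψ : H, (inner ℂ (j φ) (j ψ) : ℂ) = inner ℂ ψ φ)
    (hinv : ∀ ψ : H, j (j ψ) = ψ)
    (Sm Sp : H →L[ℂ] H)
    (hsymp : ∀ φ ψ : H,
      (inner ℂ (Sm φ + Sp (j φ)) (Sm ψ + Sp (j ψ)) : ℂ).im = (inner ℂ φ ψ : ℂ).im)
    (φ ψ : H) :
    (inner ℂ φ ((adjoint Sm) (Sm ψ)) : ℂ) - inner ℂ φ (j ((adjoint Sp) (Sp (j ψ)))) = inner ℂ φ ψ ∧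
    (inner ℂ φ ((adjoint Sm) (Sp (j ψ))) : ℂ) = inner ℂ φ (j ((adjoint Sp) (Sm ψ))) := by
  have hflip : ∀ (u X : H), (inner ℂ (j u) X : ℂ) = (starRingEnd ℂ) (inner ℂ u (j X)) := by
    intro u X
    calc (inner ℂ (j u) X : ℂ) = inner ℂ (j u) (j (j X)) := by rw [hinv]
    _ = inner ℂ (j X) u := hanti u (j X)
    _ = (starRingEnd ℂ) (inner ℂ u (j X)) := (inner_conj_symm (j X) u).symm
  have hA : (inner ℂ (Sm φ) (Sm ψ) : ℂ) = inner ℂ φ ((adjoint Sm) (Sm ψ)) :=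
    (adjoint_inner_right Sm φ (Sm ψ)).symm
  have hB : (inner ℂ (Sm φ) (Sp (j ψ)) : ℂ) = inner ℂ φ ((adjoint Sm) (Sp (j ψ))) :=
    (adjoint_inner_right Sm φ _).symm
  have hC : (inner ℂ (Sp (j φ)) (Sm ψ) : ℂ)
      = (starRingEnd ℂ) (inner ℂ φ (j ((adjoint Sp) (Sm ψ)))) := by
    rw [← adjoint_inner_right Sp (j φ) (Sm ψ), hflip]
  have hD : (inner ℂ (Sp (j φ)) (Sp (j ψ)) : ℂ)
      = (starRingEnd ℂ) (inner ℂ φ (j ((adjoint Sp) (Sp (j ψ))))) := by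
    rw [← adjoint_inner_right Sp (j φ) (Sp (j ψ)), hflip]
  have e1 := hsymp φ ψ
  have e2 := hsymp (Complex.I • φ) ψ
  have e3 := hsymp φ (Complex.I • ψ)
  have e4 := hsymp (Complex.I • φ) (Complex.I • ψ)
  simp only [map_smul, hsmul, Complex.conj_I, inner_add_left, inner_add_right,
    inner_smul_left, inner_smul_right, neg_smul, map_neg, inner_neg_left, inner_neg_right,
    Complex.conj_I, hA, hB, hC, hD] at e1 e2 e3 e4
  set A := (inner ℂ φ ((adjoint Sm) (Sm ψ)) : ℂ)
  set B := (inner ℂ φ ((adjoint Sm) (Sp (j ψ))) : ℂ)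
  set C := (inner ℂ φ (j ((adjoint Sp) (Sm ψ))) : ℂ)
  set D := (inner ℂ φ (j ((adjoint Sp) (Sp (j ψ)))) : ℂ)
  set t := (inner ℂ φ ψ : ℂ)
  constructor
  · apply Complex.ext <;>
    · simp only [Complex.add_im, Complex.add_re, Complex.sub_re, Complex.sub_im,
        Complex.mul_re, Complex.mul_im, Complex.neg_re, Complex.neg_im,
        Complex.I_re, Complex.I_im, Complex.conj_re, Complex.conj_im] at e1 e2 e3 e4 ⊢
      linarith
  · apply Complex.ext <;>
    · simp only [Complex.add_im, Complex.add_re, Complex.sub_re, Complex.sub_im,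
        Complex.mul_re, Complex.mul_im, Complex.neg_re, Complex.neg_im,
        Complex.I_re, Complex.I_im, Complex.conj_re, Complex.conj_im] at e1 e2 e3 e4 ⊢
      linarith

/-- If the real-linear map Sφ = S₋φ + S₊jφ preserves the symplectic form and
the block operator S̆ = [[S₋, S₊],[jS₊j, jS₋j]] is bijective, then
S̆⁻¹ = [[S₋*, −jS₊*j],[−S₊*, jS₋*j]]. -/
theorem stmt_19 {H : Type*} [NormedAddCommGroup H] [InnerProductSpace ℂ H]
    [CompleteSpace H] (j : H → H)
    (hadd : ∀ φ ψ : H, j (φ + ψ) = j φ + j ψ)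
    (hsmul : ∀ (c : ℂ) (ψ : H), j (c • ψ) = (starRingEnd ℂ c) • j ψ)
    (hanti : ∀ φ ψ : H, (inner ℂ (j φ) (j ψ) : ℂ) = inner ℂ ψ φ)
    (hinv : ∀ ψ : H, j (j ψ) = ψ)
    (Sm Sp Scm Scp Stm Stp : H →L[ℂ] H)
    (hScm : ∀ ψ : H, Scm ψ = j (Sm (j ψ)))
    (hScp : ∀ ψ : H, Scp ψ = j (Sp (j ψ)))
    (hStm : ∀ ψ : H, Stm ψ = j ((ContinuousLinearMap.adjoint Sm) (j ψ)))
    (hStp : ∀ ψ : H, Stp ψ = j ((ContinuousLinearMap.adjoint Sp) (j ψ)))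
    (hsymp : ∀ φ ψ : H,
      (inner ℂ (Sm φ + Sp (j φ)) (Sm ψ + Sp (j ψ)) : ℂ).im = (inner ℂ φ ψ : ℂ).im)
    (hbij : Function.Bijective
      (fun p : H × H => (Sm p.1 + Sp p.2, Scp p.1 + Scm p.2))) :
    (!![Sm, Sp; Scp, Scm] : Matrix (Fin 2) (Fin 2) (H →L[ℂ] H)) *
        !![ContinuousLinearMap.adjoint Sm, -Stp;
           -(ContinuousLinearMap.adjoint Sp), Stm] = 1 ∧
    (!![ContinuousLinearMap.adjoint Sm, -Stp;
        -(ContinuousLinearMap.adjoint Sp), Stm] : Matrix (Fin 2) (Fin 2) (H →L[ℂ] H)) *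
        !![Sm, Sp; Scp, Scm] = 1 := by
  have hj0 : j 0 = 0 := by
    have := hsmul 0 0
    simpa using this
  have hjneg : ∀ ψ : H, j (-ψ) = -(j ψ) := by
    intro ψ
    have := hsmul (-1) ψ
    simpa using this
  have F1 : ∀ ψ : H, (adjoint Sm) (Sm ψ) = ψ + j ((adjoint Sp) (Sp (j ψ))) := by
    intro ψ
    apply ext_inner_left ℂ
    intro φ
    have := (stmt_19_core j hsmul hanti hinv Sm Sp hsymp φ ψ).1
    rw [inner_add_right]
    linear_combination this
  have F2 : ∀ ψ : H, (adjoint Sm) (Sp ψ) = j ((adjoint Sp) (Sm (j ψ))) := by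
    intro ψ
    have h : ∀ χ : H, (adjoint Sm) (Sp (j χ)) = j ((adjoint Sp) (Sm χ)) := by
      intro χ
      apply ext_inner_left ℂ
      intro φ
      exact (stmt_19_core j hsmul hanti hinv Sm Sp hsymp φ χ).2
    have := h (j ψ)
    rwa [hinv] at this
  have hsurj : ∀ u v : H, ∃ φ χ : H, Sm φ + Sp χ = u ∧ j (Sp (j φ)) + j (Sm (j χ)) = v := by
    intro u v
    obtain ⟨⟨φ, χ⟩, hp⟩ := hbij.2 (u, v)
    simp only [Prod.mk.injEq] at hp
    refine ⟨φ, χ, hp.1, ?_⟩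
    rw [← hScp, ← hScm]
    exact hp.2
  exact stmt_19_aux j hadd hjneg hj0 hinv Sm Sp Scm Scp Stm Stp
    (adjoint Sm) (adjoint Sp) hScm hScp hStm hStp F1 F2 hsurj
end
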